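/- arXiv:2602.16885 — 5 statements merged into one kernel-verified Lean document; each statement's English description precedes it below -/
import Mathlib

section
/- Let a countable group G act on a probability space (X, μ) by measure-preserving transformations. Then the function χ(g) = μ(Fix(g)), where Fix(g) = {x ∈ X : g·x = x}, is a positive-definite function on G; more precisely, for any g₁,…,gₙ ∈ G and c₁,…,cₙ ∈ ℂ, Σᵢⱼ cᵢ·conj(cⱼ)·μ(Fix(gᵢgⱼ⁻¹)) ≥ 0. -/
/-!
Translating `Fix (gᵢ gⱼ⁻¹)` by `gⱼ` turns it into the coincidence set `{x | gᵢ • x = gⱼ • x}`,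
which has the same measure. The sum is therefore the integral of
`x ↦ ∑ᵢⱼ cᵢ c̄ⱼ [gᵢ • x = gⱼ • x]`, and at each point this equals `∑_y |∑_{gᵢ • x = y} cᵢ|² ≥ 0`.
-/

open MeasureTheory Finset ComplexOrder

theorem sum_ite_eq_mul_star_nonneg {ι Y R : Type*} [Fintype ι] [DecidableEq Y]
    [NonUnitalSemiring R] [PartialOrder R] [StarRing R] [StarOrderedRing R]
    (f : ι → Y) (c : ι → R) :
    0 ≤ ∑ i, ∑ j, if f i = f j then c i * star (c j) else 0 := by
  have hfiber : ∀ i, (∑ j, if f i = f j then c i * star (c j) else 0)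
      = c i * star (∑ j with f j = f i, c j) := by
    intro i
    rw [star_sum, mul_sum, sum_filter]
    exact sum_congr rfl fun j _ => by simp only [eq_comm]
  calc (0 : R) ≤ ∑ y ∈ univ.image f, (∑ i with f i = y, c i) * star (∑ j with f j = y, c j) :=
        sum_nonneg fun y _ => mul_star_self_nonneg _
    _ = ∑ y ∈ univ.image f, ∑ i with f i = y, c i * star (∑ j with f j = f i, c j) := by
        refine sum_congr rfl fun y _ => ?_
        rw [sum_mul]
        exact sum_congr rfl fun i hi => by rw [(mem_filter.mp hi).2]
    _ = ∑ i, ∑ j, if f i = f j then c i * star (c j) else 0 := by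
        rw [sum_fiberwise_of_maps_to fun i _ => mem_image_of_mem f (mem_univ i)]
        exact sum_congr rfl fun i _ => (hfiber i).symm

theorem sum_mul_measureReal_setOf_eq_nonneg {ι X Y : Type*} [Fintype ι] [MeasurableSpace X]
    {μ : Measure X} [IsFiniteMeasure μ] {f : ι → X → Y}
    (hf : ∀ i j, MeasurableSet {x | f i x = f j x}) (c : ι → ℂ) :
    0 ≤ ∑ i, ∑ j, c i * star (c j) * (μ.real {x | f i x = f j x} : ℂ) := by
  classical
  have hint : ∀ i j, Integrable
      (fun x => if f i x = f j x then c i * star (c j) else 0) μ := fun i j =>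
    (integrable_const (c i * star (c j))).indicator (hf i j)
  have hterm : ∀ i j, c i * star (c j) * (μ.real {x | f i x = f j x} : ℂ)
      = ∫ x, if f i x = f j x then c i * star (c j) else 0 ∂μ := fun i j => by
    rw [mul_comm, ← Complex.real_smul]
    exact (integral_indicator_const (c i * star (c j)) (hf i j)).symm
  calc (0 : ℂ) ≤ ∫ x, ∑ i, ∑ j, (if f i x = f j x then c i * star (c j) else 0) ∂μ :=
        integral_nonneg fun x => sum_ite_eq_mul_star_nonneg (f · x) c
    _ = _ := by
        rw [integral_finsetSum _ fun i _ => integrable_finsetSum _ fun j _ => hint i j]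
        refine sum_congr rfl fun i _ => ?_
        rw [integral_finsetSum _ fun j _ => hint i j]
        exact sum_congr rfl fun j _ => (hterm i j).symm

theorem preimage_smul_setOf_mul_inv_smul_eq_self {G X : Type*} [Group G] [MulAction G X]
    (a b : G) : (b • ·) ⁻¹' {x : X | (a * b⁻¹) • x = x} = {x | a • x = b • x} := by
  ext x
  simp [mul_smul]

theorem fix_measure_posdef_general {G X : Type*} [Group G]
    [MulAction G X] [MeasurableSpace X]
    (μ : Measure X) [IsProbabilityMeasure μ]
    (hmp : ∀ g : G, MeasurePreserving (fun x : X => g • x) μ μ)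
    (hfix : ∀ g : G, MeasurableSet {x : X | g • x = x})
    (n : ℕ) (g : Fin n → G) (c : Fin n → ℂ) :
    ∃ r : ℝ, 0 ≤ r ∧
      (∑ i : Fin n, ∑ j : Fin n, c i * starRingEnd ℂ (c j) *
        ((μ {x : X | (g i * (g j)⁻¹) • x = x}).toReal : ℂ)) = (r : ℂ) := by
  have hpre (i j : Fin n) := preimage_smul_setOf_mul_inv_smul_eq_self (X := X) (g i) (g j)
  have hmeas (i j : Fin n) : MeasurableSet {x : X | g i • x = g j • x} :=
    hpre i j ▸ (hmp (g j)).measurable (hfix _)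
  have hfixed (i j : Fin n) :
      μ {x : X | (g i * (g j)⁻¹) • x = x} = μ {x | g i • x = g j • x} :=
    hpre i j ▸ ((hmp (g j)).measure_preimage (hfix _).nullMeasurableSet).symm
  obtain ⟨r, hr, hsum⟩ := RCLike.nonneg_iff_exists_ofReal.mp
    (sum_mul_measureReal_setOf_eq_nonneg (μ := μ) hmeas c)
  refine ⟨r, hr, ?_⟩
  simp_rw [hfixed]
  exact hsum.symm

/-- The function `g ↦ μ(Fix g)` arising from a measure-preserving action of a
countable group on a probability space is positive-definite. -/
theorem fix_measure_posdef {G X : Type*} [Group G] [Countable G]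
    [MulAction G X] [MeasurableSpace X]
    (μ : Measure X) [IsProbabilityMeasure μ]
    (hmp : ∀ g : G, MeasurePreserving (fun x : X => g • x) μ μ)
    (hfix : ∀ g : G, MeasurableSet {x : X | g • x = x})
    (n : ℕ) (g : Fin n → G) (c : Fin n → ℂ) :
    ∃ r : ℝ, 0 ≤ r ∧
      (∑ i : Fin n, ∑ j : Fin n, c i * starRingEnd ℂ (c j) *
        ((μ {x : X | (g i * (g j)⁻¹) • x = x}).toReal : ℂ)) = (r : ℂ) :=
  fix_measure_posdef_general μ hmp hfix n g c
end

section
/- For every 1 ≤ k ≤ n-1, the binomial coefficient inequality C(2n, 2k) ≥ (2n-1)·C(n, k) holds. -/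
open Nat

lemma fact_two_mul' (j : ℕ) : (2*j)! = (2*j-1)‼ * (2^j * j !) := by
  cases j with
  | zero => simp
  | succ j =>
    have h : 2*(j+1) = (2*j+1)+1 := by ring
    rw [h, Nat.factorial_eq_mul_doubleFactorial]
    have : (2*j+1)+1 = 2*(j+1) := by ring
    rw [this, Nat.doubleFactorial_two_mul]
    have : 2*(j+1)-1 = 2*j+1 := by omega
    rw [this]
    ring

lemma dfC (a b : ℕ) : (2*a+1)‼ * (2*b+1)‼ ≤ (2*(a+b)+1)‼ := by
  induction b with
  | zero => simp
  | succ b ih =>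
    have h1 : 2*(b+1)+1 = (2*b+1)+2 := by ring
    have h2 : 2*(a+(b+1))+1 = (2*(a+b)+1)+2 := by ring
    rw [h1, h2, Nat.doubleFactorial_add_two, Nat.doubleFactorial_add_two]
    calc (2*a+1)‼ * ((2*b+1+2) * (2*b+1)‼)
        = (2*b+1+2) * ((2*a+1)‼ * (2*b+1)‼) := by ring
      _ ≤ (2*(a+b)+1+2) * (2*(a+b)+1)‼ := Nat.mul_le_mul (by omega) ih

lemma identA (k m : ℕ) :
    (2*(k+m)).choose (2*k) * ((2*k-1)‼ * (2*m-1)‼)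
      = (k+m).choose k * (2*(k+m)-1)‼ := by
  apply Nat.eq_of_mul_eq_mul_right (show 0 < 2^(k+m) * (k ! * m !) by positivity)
  have hk : 2*k ≤ 2*(k+m) := by omega
  have hsub : 2*(k+m) - 2*k = 2*m := by omega
  have hch := Nat.choose_mul_factorial_mul_factorial hk
  rw [hsub] at hch
  have hch2 := Nat.choose_mul_factorial_mul_factorial (show k ≤ k+m by omega)
  have hsub2 : k + m - k = m := by omega
  rw [hsub2] at hch2
  calc (2*(k+m)).choose (2*k) * ((2*k-1)‼ * (2*m-1)‼) * (2^(k+m) * (k ! * m !))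
      = (2*(k+m)).choose (2*k) * ((2*k-1)‼ * (2^k * k !)) * ((2*m-1)‼ * (2^m * m !)) := by
        rw [pow_add]; ring
    _ = (2*(k+m)).choose (2*k) * (2*k)! * (2*m)! := by
        rw [fact_two_mul', fact_two_mul']
    _ = (2*(k+m))! := hch
    _ = (2*(k+m)-1)‼ * (2^(k+m) * (k+m)!) := fact_two_mul' (k+m)
    _ = (2*(k+m)-1)‼ * (2^(k+m) * ((k+m).choose k * k ! * m !)) := by rw [hch2]
    _ = (k+m).choose k * (2*(k+m)-1)‼ * (2^(k+m) * (k ! * m !)) := by ring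

theorem central_binomial_ineq (n k : ℕ) (h1 : 1 ≤ k) (h2 : k ≤ n - 1) :
    (2 * n - 1) * Nat.choose n k ≤ Nat.choose (2 * n) (2 * k) := by
  obtain ⟨m, hm1, hm2⟩ : ∃ m, 1 ≤ m ∧ n = k + m := ⟨n - k, by omega, by omega⟩
  subst hm2
  set a := k - 1 with ha
  set b := m - 1 with hb
  have hka : k = a + 1 := by omega
  have hmb : m = b + 1 := by omega
  have hD : (2*k-1)‼ * (2*m-1)‼ = (2*a+1)‼ * (2*b+1)‼ := by
    rw [show 2*k-1 = 2*a+1 by omega, show 2*m-1 = 2*b+1 by omega]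
  have hdf : (2*(k+m)-1)‼ = (2*(a+b)+1+2) * (2*(a+b)+1)‼ := by
    rw [show 2*(k+m)-1 = (2*(a+b)+1)+2 by omega, Nat.doubleFactorial_add_two]
  have hB : (2*(k+m)-1) * ((2*k-1)‼ * (2*m-1)‼) ≤ (2*(k+m)-1)‼ := by
    rw [hD, hdf]
    exact Nat.mul_le_mul (by omega) (dfC a b)
  have key := identA k m
  have hpos : 0 < (2*k-1)‼ * (2*m-1)‼ := by positivity
  have : (2*(k+m)-1) * (k+m).choose k * ((2*k-1)‼ * (2*m-1)‼)
      ≤ (2*(k+m)).choose (2*k) * ((2*k-1)‼ * (2*m-1)‼) := by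
    rw [key]
    calc (2*(k+m)-1) * (k+m).choose k * ((2*k-1)‼ * (2*m-1)‼)
        = (k+m).choose k * ((2*(k+m)-1) * ((2*k-1)‼ * (2*m-1)‼)) := by ring
      _ ≤ (k+m).choose k * (2*(k+m)-1)‼ := Nat.mul_le_mul_left _ hB
  exact Nat.le_of_mul_le_mul_right this hpos
end

section
/- For any real number x and any n ≥ 1, the sum over all permutations s of {1,…,n} of x raised to the number of cycles of s equals the rising factorial x(x+1)⋯(x+n-1); i.e., Σ_{s ∈ Sym(n)} x^{c(s)} = ∏_{j=0}^{n-1} (x + j), where c(s) is the number of cycles of s (fixed points counted as cycles of length 1). -/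
/-!
Count cycles as classes of `SameCycle`; these are the fixed points together with the supports
of the cycle factors, which gives the exponent `(n - #support) + #cycleType`.
Every permutation of `Option α` is `swap none o * optionCongr e` for a unique pair `(o, e)`.
For `o = none` the point `none` is a new fixed point, adding one cycle; for `o = some a` it is
inserted into the cycle of `a`, right before `a`, and the number of cycles does not change.
So passing from `α` to `Option α` multiplies the generating function by `x + |α|`.
-/

open Finset Function

theorem Setoid.card_quotient_eq_of_surjective {α β : Type*} {r : Setoid α} {π : α → β}
    (hπ : Surjective π) (h : ∀ u v, r u v ↔ π u = π v) :
    Nat.card (Quotient r) = Nat.card β := by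
  obtain rfl : r = Setoid.ker π := Setoid.ext h
  exact Nat.card_congr (Setoid.quotientKerEquivOfSurjective π hπ)

namespace Equiv.Perm

variable {α β : Type*}

theorem SameCycle.map_of_forall_sameCycle {f : Perm α} {g : Perm β} {π : α → β}
    (hπ : ∀ z, g.SameCycle (π z) (π (f z))) {x y : α} (h : f.SameCycle x y) :
    g.SameCycle (π x) (π y) := by
  obtain ⟨k, rfl⟩ := h
  induction k using Int.induction_on with
  | zero => exact SameCycle.refl _ _
  | succ k ih =>
    rw [add_comm, zpow_add, zpow_one, mul_apply]
    exact ih.trans (hπ _)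
  | pred k ih =>
    rw [show -(k : ℤ) - 1 = -1 + -k by ring, zpow_add, zpow_neg_one, mul_apply]
    refine ih.trans (g.sameCycle_comm.1 ?_)
    simpa using hπ (f⁻¹ ((f ^ (-(k : ℤ))) x))

noncomputable def numCycles (σ : Perm α) : ℕ :=
  Nat.card (Quotient (SameCycle.setoid σ))

theorem sameCycle_permCongr {e : α ≃ β} {σ : Perm α} {u v : β} :
    (e.permCongr σ).SameCycle u v ↔ σ.SameCycle (e.symm u) (e.symm v) := by
  constructor
  · exact SameCycle.map_of_forall_sameCycle fun z => ⟨1, by simp [permCongr_apply]⟩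
  · intro h
    simpa using h.map_of_forall_sameCycle (π := e) (g := e.permCongr σ)
      fun z => ⟨1, by simp [permCongr_apply]⟩

theorem numCycles_permCongr (e : α ≃ β) (σ : Perm α) :
    numCycles (e.permCongr σ) = numCycles σ :=
  Setoid.card_quotient_eq_of_surjective (π := Quotient.mk _ ∘ e.symm)
    (Quotient.mk_surjective.comp e.symm.surjective)
    fun _ _ => sameCycle_permCongr.trans (Quotient.eq (r := SameCycle.setoid σ)).symm

theorem sameCycle_optionCongr_some {e : Perm α} {x y : α} :
    SameCycle (optionCongr e) (some x) (some y) ↔ e.SameCycle x y := by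
  constructor
  · intro h
    simpa using h.map_of_forall_sameCycle (π := fun u => u.getD x) (g := e)
      (by rintro (_ | z); exacts [SameCycle.refl _ _, ⟨1, by simp⟩])
  · exact SameCycle.map_of_forall_sameCycle fun z => ⟨1, by simp⟩

theorem numCycles_optionCongr [Finite α] (e : Perm α) :
    numCycles (optionCongr e) = numCycles e + 1 := by
  have hπ : Surjective (Option.map (Quotient.mk (SameCycle.setoid e))) := by
    rintro (_ | q)
    · exact ⟨none, rfl⟩
    · obtain ⟨x, rfl⟩ := Quotient.mk_surjective q
      exact ⟨some x, rfl⟩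
  rw [numCycles, Setoid.card_quotient_eq_of_surjective hπ, Finite.card_option, numCycles]
  rintro (_ | x) (_ | y)
  · simp
  · simpa using fun h => Option.some_ne_none _ (h.eq_of_left rfl).symm
  · simpa using fun h => Option.some_ne_none _ (h.eq_of_right rfl)
  · rw [Option.map_some, Option.map_some, Option.some_inj, Quotient.eq]
    exact sameCycle_optionCongr_some

section InsertNone

variable [DecidableEq α] (e : Perm α) (a : α)

theorem getD_swap_none_mul_optionCongr_some (z : α) :
    ((swap none (some a) * optionCongr e) (some z)).getD a = e z := by
  by_cases h : e z = a <;> simp [swap_apply_def, h]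

theorem sameCycle_swap_none_mul_optionCongr_some_apply (z : α) :
    SameCycle (swap none (some a) * optionCongr e) (some z) (some (e z)) := by
  by_cases h : e z = a
  · exact ⟨2, by simp [h, pow_two]⟩
  · exact ⟨1, by simp [h, swap_apply_def]⟩

theorem sameCycle_swap_none_mul_optionCongr {u v : Option α} :
    SameCycle (swap none (some a) * optionCongr e) u v ↔ e.SameCycle (u.getD a) (v.getD a) := by
  set σ := swap none (some a) * optionCongr e
  constructor
  · refine SameCycle.map_of_forall_sameCycle (π := fun w : Option α => w.getD a) ?_
    rintro (_ | z)
    · simpa [σ] using SameCycle.refl e a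
    · rw [getD_swap_none_mul_optionCongr_some]
      exact ⟨1, rfl⟩
  · have hsome {x y : α} : e.SameCycle x y → σ.SameCycle (some x) (some y) :=
      SameCycle.map_of_forall_sameCycle (sameCycle_swap_none_mul_optionCongr_some_apply e a)
    have hgetD : ∀ w : Option α, σ.SameCycle w (some (w.getD a)) := by
      rintro (_ | z)
      exacts [⟨1, by simp [σ]⟩, SameCycle.refl _ _]
    exact fun h => (hgetD u).trans ((hsome h).trans (hgetD v).symm)

theorem numCycles_swap_none_mul_optionCongr :
    numCycles (swap none (some a) * optionCongr e) = numCycles e :=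
  Setoid.card_quotient_eq_of_surjective (π := Quotient.mk _ ∘ fun u => u.getD a)
    (Quotient.mk_surjective.comp fun x => ⟨some x, rfl⟩)
    fun _ _ => (sameCycle_swap_none_mul_optionCongr e a).trans
      (Quotient.eq (r := SameCycle.setoid e)).symm

end InsertNone

section Fintype

variable [Fintype α] [DecidableEq α]

def cycleOrFixedPt (σ : Perm α) (x : α) : fixedPoints σ ⊕ σ.cycleFactorsFinset :=
  if h : σ x = x then .inl ⟨x, h⟩
  else .inr ⟨σ.cycleOf x, cycleOf_mem_cycleFactorsFinset_iff.2 (mem_support.2 h)⟩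

theorem cycleOrFixedPt_eq_iff {σ : Perm α} {x y : α} :
    σ.cycleOrFixedPt x = σ.cycleOrFixedPt y ↔ σ.SameCycle x y := by
  by_cases hx : σ x = x <;> by_cases hy : σ y = y <;> simp only [cycleOrFixedPt, hx, hy,
    dite_true, dite_false, reduceCtorEq, false_iff, Sum.inl.injEq, Sum.inr.injEq, Subtype.ext_iff]
  · exact ⟨fun h => h ▸ SameCycle.refl _ _, fun h => h.eq_of_left hx⟩
  · exact fun h => hy (h.apply_eq_self_iff.1 hx)
  · exact fun h => hx (h.apply_eq_self_iff.2 hy)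
  · exact (sameCycle_iff_cycleOf_eq_of_mem_support (mem_support.2 hx) (mem_support.2 hy)).symm

theorem cycleOrFixedPt_surjective (σ : Perm α) : Surjective σ.cycleOrFixedPt := by
  rintro (⟨x, hx⟩ | ⟨c, hc⟩)
  · exact ⟨x, by simp [cycleOrFixedPt, show σ x = x from hx]⟩
  · obtain ⟨a, ha⟩ := (mem_cycleFactorsFinset_iff.1 hc).1.nonempty_support
    have hσa : σ a ≠ a := mem_support.1 (mem_cycleFactorsFinset_support_le hc ha)
    exact ⟨a, by simp [cycleOrFixedPt, hσa, ← cycle_is_cycleOf ha hc]⟩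

theorem numCycles_eq (σ : Perm α) :
    numCycles σ = (Fintype.card α - #σ.support) + Multiset.card σ.cycleType := by
  rw [numCycles, Setoid.card_quotient_eq_of_surjective σ.cycleOrFixedPt_surjective
    fun _ _ => cycleOrFixedPt_eq_iff.symm, Nat.card_sum, Nat.card_eq_fintype_card,
    card_fixedPoints, sum_cycleType, Nat.card_eq_fintype_card, cycleType_def, Multiset.card_map,
    Fintype.card_coe]
  rfl

variable {R : Type*} [CommSemiring R] (x : R)

theorem sum_pow_numCycles_option :
    ∑ σ : Perm (Option α), x ^ numCycles σ =
      (x + Fintype.card α) * ∑ e : Perm α, x ^ numCycles e := by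
  rw [← decomposeOption.symm.sum_comp, Fintype.sum_prod_type, Fintype.sum_option]
  simp [swap_self, ← Perm.one_def, numCycles_optionCongr, numCycles_swap_none_mul_optionCongr,
    pow_succ', ← mul_sum, add_mul]

end Fintype

theorem sum_pow_numCycles {R : Type*} [CommSemiring R] (x : R) {α : Type*} [Fintype α]
    [DecidableEq α] :
    ∑ σ : Perm α, x ^ numCycles σ = ∏ j ∈ range (Fintype.card α), (x + j) := by
  refine Fintype.induction_empty_option (P := fun α _ => ∀ [DecidableEq α],
    ∑ σ : Perm α, x ^ numCycles σ = ∏ j ∈ range (Fintype.card α), (x + j)) ?_ ?_ ?_ α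
  · intro α β _ e ih _
    let _ := Fintype.ofEquiv β e.symm
    let _ := e.decidableEq
    rw [← Fintype.card_congr e, ← ih]
    exact (Fintype.sum_equiv e.permCongr _ _ fun σ => by rw [numCycles_permCongr]).symm
  · intro _
    simp [numCycles]
  · intro α _ ih inst
    let _ := Classical.decEq α
    obtain rfl : inst = Option.instDecidableEq := Subsingleton.elim _ _
    rw [sum_pow_numCycles_option, ih, Fintype.card_option, range_add_one, prod_insert (by simp)]

end Equiv.Perm

theorem sum_pow_cycles_general (n : ℕ) (x : ℝ) :
    ∑ s : Equiv.Perm (Fin n),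
        x ^ ((n - s.support.card) + Multiset.card s.cycleType) =
      ∏ j ∈ Finset.range n, (x + j) := by
  simpa [Equiv.Perm.numCycles_eq] using Equiv.Perm.sum_pow_numCycles x (α := Fin n)

/-- `∑_{s ∈ Sym(n)} x^{c(s)} = x(x+1)⋯(x+n-1)`, where `c(s)` is the number of
cycles of `s` counting fixed points as cycles of length 1. -/
theorem sum_pow_cycles (n : ℕ) (hn : 1 ≤ n) (x : ℝ) :
    ∑ s : Equiv.Perm (Fin n),
        x ^ ((n - s.support.card) + Multiset.card s.cycleType) =
      ∏ j ∈ Finset.range n, (x + j) :=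
  sum_pow_cycles_general n x
end

section
/- Let α ≥ 0 be a real number. If k^α is a nonnegative integer for every positive integer k, then α is a nonnegative integer. -/
/-!
Let `m = ⌊α⌋ + 1`. The `m`-th forward difference `Δ^m (x ↦ x ^ α)` at a positive integer `k`
is an integer combination of the integers `(k + j) ^ α`, hence an integer. By the mean value
theorem applied `m` times it equals `α (α - 1) ⋯ (α - m + 1) ξ ^ (α - m)` for some `ξ ≥ k`;
since `α < m` this tends to `0` as `k → ∞`, so, being an integer, it vanishes for large `k`.
Then one of the factors `α - j` vanishes, so `α` is a natural number.
-/

open Filter Set Topology fwdDiff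

theorem fwdDiff_iter_mem_of_forall_mem {M G : Type*} [AddCommMonoid M] [AddCommGroup G]
    (S : AddSubgroup G) (h : M) (f : M → G) (n : ℕ) (y : M)
    (hf : ∀ k ≤ n, f (y + k • h) ∈ S) : (Δ_[h])^[n] f y ∈ S := by
  rw [fwdDiff_iter_eq_sum_shift]
  exact S.sum_mem fun k hk ↦ S.zsmul_mem (hf k (Nat.lt_succ_iff.mp (Finset.mem_range.mp hk))) _

theorem exists_fwdDiff_iter_eq_of_hasDerivAt (m : ℕ) (f : ℕ → ℝ → ℝ) (x : ℝ)
    (hf : ∀ i < m, ∀ y, x ≤ y → HasDerivAt (f i) (f (i + 1) y) y) :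
    ∃ ξ ∈ Icc x (x + m), (Δ_[1])^[m] (f 0) x = f m ξ := by
  induction m generalizing f with
  | zero => exact ⟨x, by simp, rfl⟩
  | succ m ih =>
    have hΔf : ∀ i < m, ∀ y, x ≤ y →
        HasDerivAt (Δ_[1] (f i)) (Δ_[1] (f (i + 1)) y) y := fun i hi y hy ↦
      ((hf i (by omega) (y + 1) (by linarith)).comp_add_const y 1).sub (hf i (by omega) y hy)
    obtain ⟨ξ, ⟨hxξ, hξx⟩, hΔξ⟩ := ih (fun i ↦ Δ_[1] (f i)) hΔf
    have hderiv : ∀ t ∈ Icc ξ (ξ + 1), HasDerivAt (f m) (f (m + 1) t) t := fun t ht ↦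
      hf m m.lt_succ_self t (hxξ.trans ht.1)
    obtain ⟨η, ⟨hξη, hηξ⟩, hslope⟩ := exists_hasDerivAt_eq_slope (f m) (f (m + 1))
      (lt_add_one ξ) (fun t ht ↦ (hderiv t ht).continuousAt.continuousWithinAt)
      (fun t ht ↦ hderiv t (Ioo_subset_Icc_self ht))
    refine ⟨η, ⟨by linarith, by push_cast; linarith⟩, ?_⟩
    rw [Function.iterate_succ_apply, hΔξ, hslope, add_sub_cancel_left, div_one]
    rfl

theorem exists_fwdDiff_iter_rpow_eq (α : ℝ) (m : ℕ) {x : ℝ} (hx : 0 < x) :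
    ∃ ξ ∈ Icc x (x + m),
      (Δ_[1])^[m] (fun y : ℝ ↦ y ^ α) x = (descPochhammer ℝ m).eval α * ξ ^ (α - m) := by
  have hderiv : ∀ i < m, ∀ y, x ≤ y → HasDerivAt (deriv^[i] (fun y : ℝ ↦ y ^ α))
      (deriv^[i + 1] (fun y : ℝ ↦ y ^ α) y) y := by
    intro i _ y hy
    rw [Function.iterate_succ_apply']
    refine DifferentiableAt.hasDerivAt ?_
    rw [funext (Real.iter_deriv_rpow_const α · i)]
    exact (Real.differentiableAt_rpow_const_of_ne _ (hx.trans_le hy).ne').const_mul _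
  obtain ⟨ξ, hξ, hΔ⟩ := exists_fwdDiff_iter_eq_of_hasDerivAt m _ x hderiv
  exact ⟨ξ, hξ, by rw [← Real.iter_deriv_rpow_const]; exact hΔ⟩

theorem tendsto_fwdDiff_iter_rpow_atTop {α : ℝ} {m : ℕ} (hαm : α < m) :
    Tendsto (fun x ↦ (Δ_[1])^[m] (fun y : ℝ ↦ y ^ α) x) atTop (𝓝 0) := by
  set c := (descPochhammer ℝ m).eval α
  have hbound : ∀ᶠ x in atTop, ‖(Δ_[1])^[m] (fun y : ℝ ↦ y ^ α) x‖ ≤ |c| * x ^ (α - m) := by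
    filter_upwards [eventually_gt_atTop 0] with x hx
    obtain ⟨ξ, ⟨hxξ, -⟩, hΔ⟩ := exists_fwdDiff_iter_rpow_eq α m hx
    rw [hΔ, Real.norm_eq_abs, abs_mul, abs_of_pos (Real.rpow_pos_of_pos (hx.trans_le hxξ) _)]
    exact mul_le_mul_of_nonneg_left (Real.rpow_le_rpow_of_nonpos hx hxξ (by linarith))
      (abs_nonneg c)
  have hdecay : Tendsto (fun x : ℝ ↦ |c| * x ^ (α - m)) atTop (𝓝 0) := by
    simpa using (tendsto_rpow_neg_atTop (sub_pos.mpr hαm)).const_mul |c|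
  exact squeeze_zero_norm' hbound hdecay

theorem fwdDiff_iter_rpow_ne_zero {α : ℝ} {m : ℕ} (hα : ∀ j < m, α ≠ j) {x : ℝ} (hx : 0 < x) :
    (Δ_[1])^[m] (fun y : ℝ ↦ y ^ α) x ≠ 0 := by
  obtain ⟨ξ, ⟨hxξ, -⟩, hΔ⟩ := exists_fwdDiff_iter_rpow_eq α m hx
  have hc : (descPochhammer ℝ m).eval α ≠ 0 := by
    rw [descPochhammer_eval_eq_prod_range, Finset.prod_ne_zero_iff]
    exact fun j hj ↦ sub_ne_zero.mpr (hα j (Finset.mem_range.mp hj))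
  rw [hΔ]
  exact mul_ne_zero hc (Real.rpow_pos_of_pos (hx.trans_le hxξ) _).ne'

theorem rpow_nat_forces_nat_general (α : ℝ)
    (h : ∀ k : ℕ, 0 < k → ∃ m : ℕ, (k : ℝ) ^ α = m) :
    ∃ m : ℕ, α = m := by
  by_contra! hα
  set m := ⌊α⌋₊ + 1
  have hαm : α < m := by exact_mod_cast Nat.lt_floor_add_one α
  have hint : ∀ k : ℕ, 0 < k →
      (Δ_[1])^[m] (fun y : ℝ ↦ y ^ α) k ∈ (Int.castAddHom ℝ).range := by
    refine fun k hk ↦ fwdDiff_iter_mem_of_forall_mem _ _ _ _ _ fun j _ ↦ ?_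
    obtain ⟨n, hn⟩ := h (k + j) (by omega)
    exact ⟨n, by simpa using hn.symm⟩
  obtain ⟨k, hsmall, hk⟩ := (((tendsto_fwdDiff_iter_rpow_atTop hαm).comp
    tendsto_natCast_atTop_atTop).eventually (Ioo_mem_nhds neg_one_lt_zero one_pos)
    |>.and (eventually_gt_atTop 0)).exists
  obtain ⟨z, hz⟩ := hint k hk
  simp only [Int.coe_castAddHom] at hz
  rw [Function.comp_apply, ← hz] at hsmall
  have hz0 : z = 0 := Int.abs_lt_one_iff.mp
    (abs_lt.mpr ⟨by exact_mod_cast hsmall.1, by exact_mod_cast hsmall.2⟩)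
  exact fwdDiff_iter_rpow_ne_zero (fun j _ ↦ hα j) (Nat.cast_pos.mpr hk) (by rw [← hz, hz0]; simp)

/-- Putnam 1971 A-6: if `k^α` is a nonnegative integer for every positive
integer `k`, then `α` is a nonnegative integer. -/
theorem rpow_nat_forces_nat (α : ℝ) (hα : 0 ≤ α)
    (h : ∀ k : ℕ, 0 < k → ∃ m : ℕ, (k : ℝ) ^ α = m) :
    ∃ m : ℕ, α = m :=
  rpow_nat_forces_nat_general α h
end

section
/- Let G act on a probability space (X, μ) by measure-preserving transformations, let (π, H, ξ) be a unitary representation of G on a Hilbert space with a unit vector ξ such that ⟨π(g)ξ, ξ⟩ = μ(Fix(g)) for all g ∈ G, and let H₀ be the closed cyclic subspace generated by {π(g)ξ : g ∈ G}. If {gₙ} ⊆ G is a Cauchy sequence with respect to the pseudometric d(g,h) = μ({x : g·x ≠ h·x}), then the restricted operators π(gₙ)|_{H₀} converge in the strong operator topology. -/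
/-!
Invariance of `μ` turns `⟨π(g)π(k)ξ, π(h)π(k)ξ⟩ = ⟨π((hk)⁻¹gk)ξ, ξ⟩` into `μ{x | g•x = h•x}`, so
`‖π(g)η - π(h)η‖² = 2 μ{x | g•x ≠ h•x}` for every `η = π(k)ξ`. Hence `π(gₙ)η` is Cauchy for each
generator `η` of `H₀`. The vectors on which a uniformly equicontinuous sequence of linear maps is
Cauchy form a closed subspace, so `π(gₙ)v` is Cauchy for all `v ∈ H₀`, and `H` is complete.
-/

open MeasureTheory Filter

theorem UniformEquicontinuous.isClosed_setOf_cauchySeq {ι α β : Type*} [SemilatticeSup ι]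
    [Nonempty ι] [PseudoMetricSpace α] [PseudoMetricSpace β] {F : ι → α → β}
    (hF : UniformEquicontinuous F) : IsClosed {x | CauchySeq fun i => F i x} := by
  refine isClosed_of_closure_subset fun x hx => Metric.cauchySeq_iff.2 fun ε hε => ?_
  obtain ⟨δ, hδ, hFδ⟩ := Metric.uniformEquicontinuous_iff.1 hF (ε / 3) (by positivity)
  obtain ⟨y, hy, hxy⟩ := Metric.mem_closure_iff.1 hx δ hδ
  obtain ⟨N, hN⟩ := Metric.cauchySeq_iff.1 hy (ε / 3) (by positivity)
  refine ⟨N, fun m hm n hn => ?_⟩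
  calc dist (F m x) (F n x) ≤ dist (F m x) (F m y) + dist (F m y) (F n y) + dist (F n y) (F n x) :=
        dist_triangle4 _ _ _ _
    _ < ε / 3 + ε / 3 + ε / 3 := by
        gcongr
        · exact hFδ x y hxy m
        · exact hN m hm n hn
        · rw [dist_comm]; exact hFδ x y hxy n
    _ = ε := by ring

section CauchySeqSubmodule

variable {ι R E F 𝓕 : Type*} [SemilatticeSup ι] [Nonempty ι] [Ring R]
  [AddCommGroup E] [Module R E] [AddCommGroup F] [Module R F] [UniformSpace F]
  [IsUniformAddGroup F] [UniformContinuousConstSMul R F]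
  [FunLike 𝓕 E F] [LinearMapClass 𝓕 R E F]

def cauchySeqSubmodule (T : ι → 𝓕) : Submodule R E where
  carrier := {v | CauchySeq fun i => T i v}
  zero_mem' := by
    show CauchySeq fun i => T i 0
    simpa only [map_zero] using cauchySeq_const (0 : F)
  add_mem' {v w} hv hw := by
    show CauchySeq fun i => T i (v + w)
    simp only [map_add]
    exact hv.add hw
  smul_mem' c v hv := by
    show CauchySeq fun i => T i (c • v)
    simp only [map_smul]
    exact (uniformContinuous_const_smul c).comp_cauchySeq hv

end CauchySeqSubmodule

theorem cauchySeq_apply_of_mem_topologicalClosure_span {ι 𝕜 E F 𝓕 : Type*} [SemilatticeSup ι]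
    [Nonempty ι] [NormedField 𝕜] [SeminormedAddCommGroup E] [NormedSpace 𝕜 E]
    [SeminormedAddCommGroup F] [NormedSpace 𝕜 F] [FunLike 𝓕 E F] [LinearMapClass 𝓕 𝕜 E F]
    {T : ι → 𝓕} (hT : UniformEquicontinuous fun i => ⇑(T i)) {s : Set E}
    (hs : ∀ v ∈ s, CauchySeq fun i => T i v) :
    ∀ v ∈ (Submodule.span 𝕜 s).topologicalClosure, CauchySeq fun i => T i v :=
  Submodule.topologicalClosure_minimal _ (t := cauchySeqSubmodule T) (Submodule.span_le.2 hs)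
    hT.isClosed_setOf_cauchySeq

theorem measure_setOf_inv_mul_smul_eq_self {G X : Type*} [Group G] [MulAction G X]
    [MeasurableSpace X] {μ : Measure X} {k : G} (hk : MeasurePreserving (k • ·) μ μ)
    {g h : G} (hgh : MeasurableSet {x : X | g • x = h • x}) :
    μ {x | ((h * k)⁻¹ * (g * k)) • x = x} = μ {x | g • x = h • x} := by
  have : {x | ((h * k)⁻¹ * (g * k)) • x = x} = (k • ·) ⁻¹' {x : X | g • x = h • x} := by
    ext x
    simp only [Set.mem_ofPred_eq, Set.mem_preimage, mul_smul, inv_smul_eq_iff]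
  rw [this, hk.measure_preimage hgh.nullMeasurableSet]

theorem Unitary.inner_map_map_map {G 𝕜 H : Type*} [Group G] [RCLike 𝕜] [NormedAddCommGroup H]
    [InnerProductSpace 𝕜 H] [CompleteSpace H] (π : G →* unitary (H →L[𝕜] H)) (g h k : G) (v : H) :
    inner 𝕜 ((π g : H →L[𝕜] H) ((π k : H →L[𝕜] H) v)) ((π h : H →L[𝕜] H) ((π k : H →L[𝕜] H) v))
      = inner 𝕜 ((π ((h * k)⁻¹ * (g * k)) : H →L[𝕜] H) v) v := by
  have hmul : ∀ a b, (π a : H →L[𝕜] H) ((π b : H →L[𝕜] H) v) = (π (a * b) : H →L[𝕜] H) v :=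
    fun a b => by simp [map_mul]
  rw [hmul, hmul]
  conv_rhs => rw [← Unitary.inner_map_map (π (h * k)), hmul, mul_inv_cancel_left]

section CharacterOfAction

variable {G X H : Type*} [Group G] [MulAction G X] [MeasurableSpace X]
  [NormedAddCommGroup H] [InnerProductSpace ℂ H] [CompleteSpace H]
  {μ : Measure X} [IsProbabilityMeasure μ] {π : G →* unitary (H →L[ℂ] H)} {ξ : H}

theorem norm_sub_sq_eq_two_mul_measure_ne (hξ : ‖ξ‖ = 1)
    (hchar : ∀ g : G,
      (inner ℂ ((π g : H →L[ℂ] H) ξ) ξ : ℂ) = ((μ {x : X | g • x = x}).toReal : ℂ))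
    {g h k : G} (hk : MeasurePreserving (k • ·) μ μ)
    (hgh : MeasurableSet {x : X | g • x ≠ h • x}) :
    ‖(π g : H →L[ℂ] H) ((π k : H →L[ℂ] H) ξ) - (π h : H →L[ℂ] H) ((π k : H →L[ℂ] H) ξ)‖ ^ 2
      = 2 * (μ {x : X | g • x ≠ h • x}).toReal := by
  have hcompl : {x : X | g • x = h • x} = {x | g • x ≠ h • x}ᶜ := by
    ext x
    simp
  rw [norm_sub_sq (𝕜 := ℂ), Unitary.inner_map_map_map, hchar,
    measure_setOf_inv_mul_smul_eq_self hk (hcompl ▸ hgh.compl), hcompl]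
  change _ - 2 * RCLike.re ((μ.real _ : ℂ)) + _ = 2 * μ.real _
  rw [probReal_compl_eq_one_sub hgh]
  simp only [Unitary.norm_map, hξ, RCLike.re_to_complex, Complex.ofReal_re]
  ring

theorem cauchySeq_apply_of_cauchySeq_measure_ne (hξ : ‖ξ‖ = 1)
    (hmp : ∀ g : G, MeasurePreserving (fun x : X => g • x) μ μ)
    (hmeas : ∀ g h : G, MeasurableSet {x : X | g • x ≠ h • x})
    (hchar : ∀ g : G,
      (inner ℂ ((π g : H →L[ℂ] H) ξ) ξ : ℂ) = ((μ {x : X | g • x = x}).toReal : ℂ))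
    {gs : ℕ → G} (hcauchy : ∀ ε : ℝ, 0 < ε → ∃ N, ∀ n ≥ N, ∀ m ≥ N,
      (μ {x : X | gs n • x ≠ gs m • x}).toReal < ε) (k : G) :
    CauchySeq fun n => (π (gs n) : H →L[ℂ] H) ((π k : H →L[ℂ] H) ξ) := by
  refine Metric.cauchySeq_iff.2 fun ε hε => ?_
  obtain ⟨N, hN⟩ := hcauchy (ε ^ 2 / 2) (by positivity)
  refine ⟨N, fun n hn m hm => ?_⟩
  rw [dist_eq_norm, ← pow_lt_pow_iff_left₀ (norm_nonneg _) hε.le two_ne_zero,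
    norm_sub_sq_eq_two_mul_measure_ne hξ hchar (hmp k) (hmeas _ _)]
  linarith [hN n hn m hm]

end CharacterOfAction

theorem groupoid_representation_continuity_general {G X H : Type*} [Group G]
    [MulAction G X] [MeasurableSpace X]
    [NormedAddCommGroup H] [InnerProductSpace ℂ H] [CompleteSpace H]
    (μ : Measure X) [IsProbabilityMeasure μ]
    (hmp : ∀ g : G, MeasurePreserving (fun x : X => g • x) μ μ)
    (hmeas : ∀ g h : G, MeasurableSet {x : X | g • x ≠ h • x})
    (π : G →* unitary (H →L[ℂ] H)) (ξ : H) (hξ : ‖ξ‖ = 1)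
    (hchar : ∀ g : G,
      (inner ℂ ((π g : H →L[ℂ] H) ξ) ξ : ℂ) = ((μ {x : X | g • x = x}).toReal : ℂ))
    (gs : ℕ → G)
    (hcauchy : ∀ ε : ℝ, 0 < ε → ∃ N, ∀ n ≥ N, ∀ m ≥ N,
      (μ {x : X | gs n • x ≠ gs m • x}).toReal < ε) :
    ∀ v ∈ (Submodule.span ℂ
        (Set.range fun g : G => (π g : H →L[ℂ] H) ξ)).topologicalClosure,
      ∃ w : H, Tendsto (fun n => (π (gs n) : H →L[ℂ] H) v) atTop (nhds w) := by
  have hequi : UniformEquicontinuous fun n => ⇑(π (gs n) : H →L[ℂ] H) :=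
    LipschitzWith.uniformEquicontinuous _ 1 fun n =>
      (AddMonoidHomClass.isometry_of_norm _ (Unitary.norm_map (π (gs n)))).lipschitz
  intro v hv
  refine cauchySeq_tendsto_of_complete
    (cauchySeq_apply_of_mem_topologicalClosure_span hequi ?_ v hv)
  rintro _ ⟨k, rfl⟩
  exact cauchySeq_apply_of_cauchySeq_measure_ne hξ hmp hmeas hchar hcauchy k

/-- If `⟨π(g)ξ, ξ⟩ = μ(Fix g)` for a unitary representation `π` and unit vector
`ξ`, and `{gₙ}` is Cauchy in the uniform pseudometric
`d(g,h) = μ{x : g·x ≠ h·x}`, then the operators `π(gₙ)` converge strongly on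
the cyclic subspace generated by `ξ`. -/
theorem groupoid_representation_continuity {G X H : Type*} [Group G] [Countable G]
    [MulAction G X] [MeasurableSpace X]
    [NormedAddCommGroup H] [InnerProductSpace ℂ H] [CompleteSpace H]
    (μ : Measure X) [IsProbabilityMeasure μ]
    (hmp : ∀ g : G, MeasurePreserving (fun x : X => g • x) μ μ)
    (hmeas : ∀ g h : G, MeasurableSet {x : X | g • x ≠ h • x})
    (π : G →* unitary (H →L[ℂ] H)) (ξ : H) (hξ : ‖ξ‖ = 1)
    (hchar : ∀ g : G,
      (inner ℂ ((π g : H →L[ℂ] H) ξ) ξ : ℂ) = ((μ {x : X | g • x = x}).toReal : ℂ))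
    (gs : ℕ → G)
    (hcauchy : ∀ ε : ℝ, 0 < ε → ∃ N, ∀ n ≥ N, ∀ m ≥ N,
      (μ {x : X | gs n • x ≠ gs m • x}).toReal < ε) :
    ∀ v ∈ (Submodule.span ℂ
        (Set.range fun g : G => (π g : H →L[ℂ] H) ξ)).topologicalClosure,
      ∃ w : H, Tendsto (fun n => (π (gs n) : H →L[ℂ] H) v) atTop (nhds w) :=
  groupoid_representation_continuity_general μ hmp hmeas π ξ hξ hchar gs hcauchy
end
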